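/- For n ≥ 1 and k ≥ 0, the generating function A(k,n;t) counting completely unadmissible sequences of excess n and length at most k by dimension satisfies the closed form A(k,n;t) = 1 + Σ_{j=1}^{k} t^{(n+1)(2^j − 1) − 2j} / ∏_{i=1}^{j} (1 − t^{2^i − 1}). -/

import Mathlib

/-- A list `(i₁, …, i_k)` of positive integers is completely unadmissible of excess `n`
if `i_k ≥ n` and `i_j ≥ 2·i_{j+1} + 1` for all `j < k`. -/
def IsCU (n : ℕ) (l : List ℕ) : Prop :=
  (∀ x ∈ l, 0 < x) ∧ (∀ h : l ≠ [], n ≤ l.getLast h) ∧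
    ∀ m : ℕ, (hm : m + 1 < l.length) →
      2 * l.get ⟨m + 1, hm⟩ + 1 ≤ l.get ⟨m, Nat.lt_of_succ_lt hm⟩

/-- The dimension of `(i₁, …, i_k)` is `Σ_j (i_j − 1)`. -/
def dimCU (l : List ℕ) : ℕ := (l.map (· - 1)).sum

/-- The coefficient of `t^q` in `A(k,n;t)`: the number of completely unadmissible
sequences of excess `n`, length at most `k`, and dimension `q`. -/
noncomputable def cuCount (k n q : ℕ) : ℕ :=
  Nat.card {l : List ℕ // l.length ≤ k ∧ IsCU n l ∧ dimCU l = q}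

/-!
Let `F_j(n)` be the generating series of completely unadmissible sequences of excess `n` and
length exactly `j`. The last entry of such a sequence of length `j + 1` is either `n`, and removing
it leaves a sequence of excess `2n + 1` and length `j`, or it is at least `n + 1`; hence
`F_{j+1}(n) = F_{j+1}(n + 1) + t^(n-1) F_j(2n + 1)`. Write `P_j = ∏_{i ≤ j} (1 - t^(2^i - 1))`.
If `F_j(m) = t^D(m,j) / P_j` for all `m ≥ 1`, then `t^D(n,j+1) / P_{j+1}` satisfies the same
recursion in `n`. Both solutions are `O(t^(n-1))`, so their difference, being constant in `n`,
vanishes; this is the induction step on `j`.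
-/

open PowerSeries

theorem PowerSeries.eq_zero_of_eq_succ_of_X_pow_dvd {R : Type*} [Semiring R] {d : ℕ → R⟦X⟧}
    {a : ℕ} (hd : ∀ n ≥ a, d (n + 1) = d n) (hX : ∀ n ≥ a, X ^ (n - a) ∣ d n) {n : ℕ}
    (hn : a ≤ n) : d n = 0 := by
  ext q
  have hconst : ∀ i, d (n + i) = d n := fun i => by
    induction i with
    | zero => rfl
    | succ i ih => rw [← add_assoc, hd _ (by omega), ih]
  rw [← hconst (q + 1), map_zero]
  exact X_pow_dvd_iff.1 (hX _ (by omega)) q (by omega)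

theorem isCU_iff_isChain {n : ℕ} {l : List ℕ} :
    IsCU n l ↔ (∀ x ∈ l, 0 < x) ∧ (∀ x ∈ l.getLast?, n ≤ x) ∧
      l.IsChain (fun a b => 2 * b + 1 ≤ a) := by
  rcases l.eq_nil_or_concat' with rfl | ⟨l, a, rfl⟩
  · simp [IsCU]
  · simp [IsCU, List.isChain_iff_getElem]

theorem isCU_append_singleton {n a : ℕ} {l : List ℕ} :
    IsCU n (l ++ [a]) ↔ IsCU (2 * a + 1) l ∧ n ≤ a ∧ 0 < a := by
  simp only [isCU_iff_isChain, List.isChain_append]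
  simp [or_imp, forall_and]
  tauto

theorem dimCU_append_singleton (l : List ℕ) (a : ℕ) :
    dimCU (l ++ [a]) = dimCU l + (a - 1) := by
  simp [dimCU]

theorem finite_setOf_isCU (k n q : ℕ) :
    {l : List ℕ | l.length ≤ k ∧ IsCU n l ∧ dimCU l = q}.Finite := by
  refine ((List.finite_length_le (Set.Iic (q + 1)) k).image (List.map Subtype.val)).subset ?_
  rintro l ⟨hlen, ⟨hpos, -⟩, hdim⟩
  have hle : ∀ x ∈ l, x ∈ Set.Iic (q + 1) := fun x hx => by
    have := List.le_sum_of_mem (List.mem_map_of_mem (f := (· - 1)) hx)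
    have := hpos x hx
    rw [Set.mem_Iic, ← hdim, dimCU]
    omega
  lift l to List (Set.Iic (q + 1)) using hle
  exact ⟨l, by simpa using hlen, rfl⟩

def cuSet (j n q : ℕ) : Set (List ℕ) := {l | l.length = j ∧ IsCU n l ∧ dimCU l = q}

theorem cuSet_finite (j n q : ℕ) : (cuSet j n q).Finite :=
  (finite_setOf_isCU j n q).subset fun _ ⟨hlen, hl⟩ => ⟨hlen.le, hl⟩

theorem cuSet_zero (n q : ℕ) : cuSet 0 n q = {l | l = [] ∧ q = 0} := by
  ext l
  simp +contextual [cuSet, IsCU, dimCU, eq_comm]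

theorem mem_cuSet_succ {j n q : ℕ} {l : List ℕ} :
    l ∈ cuSet (j + 1) n q ↔ ∃ l' a, l = l' ++ [a] ∧ l'.length = j ∧ IsCU (2 * a + 1) l' ∧
      n ≤ a ∧ 0 < a ∧ dimCU l' + (a - 1) = q := by
  rcases l.eq_nil_or_concat' with rfl | ⟨l, a, rfl⟩
  · simp [cuSet]
  · simp [cuSet, isCU_append_singleton, dimCU_append_singleton, and_assoc]

theorem cuSet_succ_eq_empty {j n q : ℕ} (h : q + 1 < n) : cuSet (j + 1) n q = ∅ := by
  ext l
  simp only [mem_cuSet_succ, Set.mem_empty_iff_false, iff_false]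
  omega

theorem cuSet_succ_add {j n q : ℕ} (hn : 1 ≤ n) :
    cuSet (j + 1) n (q + (n - 1)) =
      cuSet (j + 1) (n + 1) (q + (n - 1)) ∪ (· ++ [n]) '' cuSet j (2 * n + 1) q := by
  ext l
  simp only [Set.mem_union, Set.mem_image, mem_cuSet_succ]
  constructor
  · rintro ⟨l', a, rfl, hl, hcu, hna, ha, hd⟩
    rcases hna.eq_or_lt with rfl | hlt
    · exact Or.inr ⟨l', ⟨hl, hcu, by omega⟩, rfl⟩
    · exact Or.inl ⟨l', a, rfl, hl, hcu, hlt, ha, hd⟩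
  · rintro (⟨l', a, rfl, hl, hcu, hna, ha, hd⟩ | ⟨l', ⟨hl, hcu, hd⟩, rfl⟩)
    · exact ⟨l', a, rfl, hl, hcu, by omega, ha, hd⟩
    · exact ⟨l', n, rfl, hl, hcu, le_rfl, hn, by omega⟩

theorem cuCount_eq_sum_ncard_cuSet (k n q : ℕ) :
    cuCount k n q = ∑ j ∈ Finset.range (k + 1), (cuSet j n q).ncard := by
  show Set.ncard {l : List ℕ | l.length ≤ k ∧ IsCU n l ∧ dimCU l = q} = _
  induction k with
  | zero =>
    congr 1
    ext l
    simp [cuSet]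
  | succ k ih =>
    have hsplit : {l : List ℕ | l.length ≤ k + 1 ∧ IsCU n l ∧ dimCU l = q} =
        {l | l.length ≤ k ∧ IsCU n l ∧ dimCU l = q} ∪ cuSet (k + 1) n q := by
      ext l
      simp only [cuSet, Set.mem_union, Set.mem_ofPred_eq, Nat.le_add_one_iff, or_and_right]
    have hdisj : Disjoint {l : List ℕ | l.length ≤ k ∧ IsCU n l ∧ dimCU l = q}
        (cuSet (k + 1) n q) :=
      Set.disjoint_left.2 fun l hl hl' => by have := hl.1; have := hl'.1; omega
    rw [hsplit, Set.ncard_union_eq hdisj (finite_setOf_isCU k n q) (cuSet_finite _ _ _), ih,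
      Finset.sum_range_succ _ (k + 1)]

/-- The dimension of the smallest sequence `(…, 4n + 3, 2n + 1, n)` of length `j`. -/
def minDim (n j : ℕ) : ℕ := (n + 1) * (2 ^ j - 1) - 2 * j

theorem minDim_succ {n : ℕ} (hn : 1 ≤ n) (j : ℕ) :
    minDim n (j + 1) = n - 1 + minDim (2 * n + 1) j := by
  obtain ⟨p, hp⟩ : ∃ p, 2 ^ j = p + 1 := ⟨2 ^ j - 1, (Nat.sub_add_cancel Nat.one_le_two_pow).symm⟩
  have hj : j ≤ p := by have := j.lt_two_pow_self; omega
  have hnp : p ≤ n * p := Nat.le_mul_of_pos_left p hn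
  simp only [minDim, pow_succ, hp, Nat.add_sub_cancel, show (p + 1) * 2 - 1 = 2 * p + 1 by omega]
  ring_nf
  omega

theorem minDim_add_one {n : ℕ} (hn : 1 ≤ n) (j : ℕ) :
    minDim (n + 1) j = minDim n j + (2 ^ j - 1) := by
  obtain ⟨p, hp⟩ : ∃ p, 2 ^ j = p + 1 := ⟨2 ^ j - 1, (Nat.sub_add_cancel Nat.one_le_two_pow).symm⟩
  have hj : j ≤ p := by have := j.lt_two_pow_self; omega
  have hnp : p ≤ n * p := Nat.le_mul_of_pos_left p hn
  simp only [minDim, hp, Nat.add_sub_cancel]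
  ring_nf
  omega

section Series

variable (R : Type*) [Semiring R]

noncomputable def cuSeries (j n : ℕ) : R⟦X⟧ := mk fun q => ((cuSet j n q).ncard : R)

theorem cuSeries_zero (n : ℕ) : cuSeries R 0 n = 1 := by
  ext q
  rw [cuSeries, coeff_mk, coeff_one, cuSet_zero]
  by_cases hq : q = 0 <;> simp [hq]

theorem cuSeries_succ {n : ℕ} (hn : 1 ≤ n) (j : ℕ) :
    cuSeries R (j + 1) n =
      cuSeries R (j + 1) (n + 1) + X ^ (n - 1) * cuSeries R j (2 * n + 1) := by
  ext q
  rw [map_add, coeff_X_pow_mul']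
  simp only [cuSeries, coeff_mk]
  split_ifs with hq
  · obtain ⟨q, rfl⟩ := Nat.exists_eq_add_of_le' hq
    have hdisj : Disjoint (cuSet (j + 1) (n + 1) (q + (n - 1)))
        ((· ++ [n]) '' cuSet j (2 * n + 1) q) :=
      Set.disjoint_left.2 fun _ hl ⟨_, _, hl'⟩ => by
        subst hl'
        have := (isCU_append_singleton.1 hl.2.1).2.1
        omega
    rw [Nat.add_sub_cancel, cuSet_succ_add hn, Set.ncard_union_eq hdisj (cuSet_finite _ _ _)
      ((cuSet_finite _ _ _).image _), Set.ncard_image_of_injective _ (List.append_left_injective _),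
      Nat.cast_add]
  · rw [cuSet_succ_eq_empty (by omega), cuSet_succ_eq_empty (by omega)]
    simp

theorem X_pow_dvd_cuSeries (j n : ℕ) : X ^ (n - 1) ∣ cuSeries R (j + 1) n :=
  X_pow_dvd_iff.2 fun q hq => by simp [cuSeries, cuSet_succ_eq_empty (show q + 1 < n by omega)]

end Series

theorem cuSeries_mul_prod (R : Type*) [CommRing R] {n : ℕ} (hn : 1 ≤ n) (j : ℕ) :
    cuSeries R j n * ∏ i ∈ Finset.Icc 1 j, (1 - X ^ (2 ^ i - 1)) = X ^ minDim n j := by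
  induction j generalizing n with
  | zero => simp [cuSeries_zero, minDim]
  | succ j ih =>
    -- an opaque exponent, so that `linear_combination` treats `X ^ e` as an atom
    obtain ⟨e, he⟩ : ∃ e, e = 2 ^ (j + 1) - 1 := ⟨_, rfl⟩
    rw [Finset.prod_Icc_succ_top (by omega), ← he]
    set P : R⟦X⟧ := ∏ i ∈ Finset.Icc 1 j, (1 - X ^ (2 ^ i - 1))
    let d : ℕ → R⟦X⟧ := fun m => cuSeries R (j + 1) m * (P * (1 - X ^ e)) - X ^ minDim m (j + 1)
    have hd : ∀ m ≥ 1, d (m + 1) = d m := fun m hm => by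
      simp only [d]
      rw [cuSeries_succ R hm, minDim_add_one hm, ← he, minDim_succ hm, pow_add, pow_add]
      linear_combination (-X ^ (m - 1) * (1 - X ^ e) : R⟦X⟧) * ih (n := 2 * m + 1) (by omega)
    have hX : ∀ m ≥ 1, X ^ (m - 1) ∣ d m := fun m hm =>
      dvd_sub (dvd_mul_of_dvd_left (X_pow_dvd_cuSeries R j m) _)
        (pow_dvd_pow X (by rw [minDim_succ hm]; omega))
    exact sub_eq_zero.1 (eq_zero_of_eq_succ_of_X_pow_dvd hd hX hn)

/-- The closed form
`A(k,n;t) = 1 + Σ_{j=1}^{k} t^{(n+1)(2^j−1)−2j} / ∏_{i=1}^{j} (1 − t^{2^i−1})`. -/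
theorem A_closed_form (n k : ℕ) (hn : 1 ≤ n) :
    (PowerSeries.mk fun q => (cuCount k n q : ℚ)) =
      1 + ∑ j ∈ Finset.Icc 1 k,
        (PowerSeries.X : PowerSeries ℚ) ^ ((n + 1) * (2 ^ j - 1) - 2 * j) *
          (∏ i ∈ Finset.Icc 1 j, (1 - (PowerSeries.X : PowerSeries ℚ) ^ (2 ^ i - 1)))⁻¹ := by
  have hseries :
      (mk fun q => (cuCount k n q : ℚ)) = ∑ j ∈ Finset.range (k + 1), cuSeries ℚ j n := by
    ext q
    simp [cuCount_eq_sum_ncard_cuSet, cuSeries]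
  have hunit (j : ℕ) :
      constantCoeff (∏ i ∈ Finset.Icc 1 j, (1 - X ^ (2 ^ i - 1)) : ℚ⟦X⟧) ≠ 0 := by
    rw [map_prod, Finset.prod_eq_one fun i hi => by
      simp [show 2 ^ i - 1 ≠ 0 by
        have := Nat.one_lt_two_pow (n := i) (by have := (Finset.mem_Icc.1 hi).1; omega); omega]]
    exact one_ne_zero
  rw [hseries, Finset.range_eq_Ico, Finset.sum_eq_sum_Ico_succ_bot (by omega), cuSeries_zero]
  congr 1
  refine Finset.sum_congr (Finset.Ico_add_one_right_eq_Icc 1 k) fun j _ => ?_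
  rw [eq_mul_inv_iff_mul_eq (hunit j), cuSeries_mul_prod ℚ hn, minDim]
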